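/- The greedy solution satisfies |OPT| ≤ M·|ALG|; that is, the bottom-up greedy algorithm is an M-approximation for the problem of finding a maximum-cardinality feasible subset of 𝒯. -/

import Mathlib

/-!
Setting: `G` is a finite tree rooted at `r`. A family `S : Fin n → Finset V` of
vertex sets of subtrees (connected subgraphs) of `G` is given; since connected
subgraphs of a tree are induced, a subtree is faithfully represented by its
vertex set. An *object* of the tree is a vertex or an edge. Capacities are
given by `k`, loads count the subtrees containing an object, feasibility means
no object is overloaded. The subtrees are indexed so that their roots appear
in nondecreasing order along some post-order (bottom-up) traversal of the tree,
which is encoded by an injective numbering `pos` of the vertices such that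
descendants of any vertex `v` appear (contiguously) before `v`.
-/

open Finset

attribute [local instance] Classical.propDecidable

/-- An *object* of a graph on vertex type `V`: a vertex or a (potential) edge. -/
abbrev Object (V : Type) := V ⊕ Sym2 V

/-- The subtree of `G` with vertex set `s` contains the object `o`. -/
def ContainsObj {V : Type} (G : SimpleGraph V) (s : Finset V) : Object V → Prop
  | Sum.inl v => v ∈ s
  | Sum.inr e => e ∈ G.edgeSet ∧ ∀ x ∈ e, x ∈ s

/-- The load induced by the subfamily `U` on the object `o`. -/
noncomputable def load {V : Type} {n : ℕ} (G : SimpleGraph V) (S : Fin n → Finset V)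
    (U : Finset (Fin n)) (o : Object V) : ℕ :=
  (U.filter fun i => ContainsObj G (S i) o).card

/-- A subfamily of subtrees is feasible if it does not overload any object. -/
def Feasible {V : Type} {n : ℕ} (G : SimpleGraph V) (S : Fin n → Finset V)
    (k : Object V → ℕ) (U : Finset (Fin n)) : Prop :=
  ∀ o : Object V, load G S U o ≤ k o

/-- The index set `𝒯_i` of the first `i` subtrees. -/
noncomputable def firstIdx (n i : ℕ) : Finset (Fin n) :=
  univ.filter fun j => (j : ℕ) < i

/-- `ALG_i`: the greedy solution after the first `i` subtrees have been considered. -/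
noncomputable def greedy {V : Type} {n : ℕ} (G : SimpleGraph V) (S : Fin n → Finset V)
    (k : Object V → ℕ) : ℕ → Finset (Fin n)
  | 0 => ∅
  | m + 1 =>
    if h : m < n then
      if Feasible G S k (insert ⟨m, h⟩ (greedy G S k m)) then
        insert ⟨m, h⟩ (greedy G S k m)
      else greedy G S k m
    else greedy G S k m

/-- `v` is an ancestor of `u` in the tree `G` rooted at `r`
(i.e. `v` lies on the unique `r`–`u` path). -/
def IsAnc {V : Type} (G : SimpleGraph V) (r v u : V) : Prop :=
  G.dist r u = G.dist r v + G.dist v u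

/-- The number of leaves of the subtree with vertex set `s` that differ from its root `rt`. -/
noncomputable def leavesCnt {V : Type} [DecidableEq V] (G : SimpleGraph V)
    (s : Finset V) (rt : V) : ℕ :=
  (s.filter fun v => v ≠ rt ∧ (s.filter fun u => G.Adj v u).card ≤ 1).card

/-!
Every subtree `T_i ∈ OPT \ ALG` is rejected because of an object `o` lying in `T_i` that is
saturated by the subtrees accepted before it; choose such an `o` whose lowest vertex is closest
to the root. As `OPT` is feasible, `o` carries at least as many subtrees of `ALG \ OPT` as of
`OPT \ ALG`, and `T_i` may be charged to any pair `(T_j, ℓ)` with `T_j ∈ ALG \ OPT` through `o`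
and `ℓ` a leaf of `T_j` below `o`.

An accepted `T_j` through a saturated object precedes the subtree it blocks, and since roots come
bottom-up, a later subtree sharing a vertex `b` with `T_j` contains all of `T_j` above `b`. So if
an earlier rejected `T_{i'}` (blocked at `o'`) is charged to the same leaf `ℓ` of `T_j`, the lowest
vertices of `o` and `o'` both lie above `ℓ` and are comparable: if that of `o'` were higher, `T_i`
would contain `o'`, contradicting the choice of `o`; otherwise `T_{i'}` contains `o`. Hence fewer
earlier rejected subtrees compete for the charges of `T_i` than there are, the charges can be
chosen injectively in index order, and `|OPT \ ALG| ≤ M · |ALG \ OPT|`.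
-/

namespace Finset

lemma card_filter_sdiff_le_of_card_filter_le {α : Type*} [DecidableEq α] {s t : Finset α}
    {p : α → Prop} [DecidablePred p]
    (h : #(s.filter p) ≤ #(t.filter p)) : #((s \ t).filter p) ≤ #((t \ s).filter p) := by
  have hd : ∀ u v : Finset α, (u \ v).filter p = u.filter p \ v.filter p := fun u v => by
    ext; simp only [mem_filter, mem_sdiff]; tauto
  rw [hd, hd]
  exact card_sdiff_le_card_sdiff_iff.mpr h

variable {α β : Type*} [LinearOrder α] [DecidableEq β]

/-- Distinct representatives chosen greedily in increasing order of `a`. -/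
lemma exists_injOn_mem_of_forall_card_lt [Nonempty β] (s : Finset α) (t : α → Finset β)
    (h : ∀ a ∈ s, ∀ u ⊆ s, (∀ b ∈ u, b < a ∧ ¬Disjoint (t b) (t a)) → #u < #(t a)) :
    ∃ f : α → β, Set.InjOn f s ∧ ∀ a ∈ s, f a ∈ t a := by
  induction s using Finset.induction_on_max with
  | empty => exact ⟨fun _ => Classical.arbitrary β, by simp, by simp⟩
  | insert a s hlt ih =>
    have has : a ∉ s := fun ha => lt_irrefl a (hlt a ha)
    obtain ⟨f, hf, hft⟩ := ih fun b hb u hu =>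
      h b (mem_insert_of_mem hb) u (hu.trans (subset_insert a s))
    have hcard : #((s.filter fun b => ¬Disjoint (t b) (t a)).image f) < #(t a) :=
      card_image_le.trans_lt <| h a (mem_insert_self a s) _
        ((filter_subset _ s).trans (subset_insert a s))
        fun b hb => ⟨hlt b (mem_filter.mp hb).1, (mem_filter.mp hb).2⟩
    obtain ⟨y, hy, hyf⟩ := exists_mem_notMem_of_card_lt_card hcard
    have hupd : Set.EqOn f (Function.update f a y) s := fun b hb =>
      (Function.update_of_ne (ne_of_mem_of_not_mem hb has) _ _).symm
    refine ⟨Function.update f a y, ?_, ?_⟩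
    · rw [coe_insert, Set.injOn_insert (by simpa using has)]
      refine ⟨hf.congr hupd, ?_⟩
      rintro ⟨b, hb, hby⟩
      rw [Function.update_self, ← hupd hb] at hby
      refine hyf (mem_image.mpr ⟨b, mem_filter.mpr ⟨hb, ?_⟩, hby⟩)
      exact not_disjoint_iff.mpr ⟨y, hby ▸ hft b hb, hy⟩
    · intro b hb
      rcases mem_insert.mp hb with rfl | hb
      · rwa [Function.update_self]
      · rw [← hupd hb]
        exact hft b hb

lemma card_le_card_biUnion_of_forall_card_lt (s : Finset α) (t : α → Finset β)
    (h : ∀ a ∈ s, ∀ u ⊆ s, (∀ b ∈ u, b < a ∧ ¬Disjoint (t b) (t a)) → #u < #(t a)) :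
    #s ≤ #(s.biUnion t) := by
  rcases s.eq_empty_or_nonempty with rfl | ⟨a, ha⟩
  · simp
  have : Nonempty β := by
    obtain ⟨y, -⟩ := card_pos.mp (Nat.zero_lt_of_lt (h a ha ∅ (empty_subset s) (by simp)))
    exact ⟨y⟩
  obtain ⟨f, hf, hft⟩ := exists_injOn_mem_of_forall_card_lt s t h
  exact card_le_card_of_injOn f (fun a ha => mem_biUnion.mpr ⟨a, ha, hft a ha⟩) hf

end Finset

namespace SimpleGraph.IsTree

variable {V : Type} {G : SimpleGraph V}

lemma length_eq_dist_of_isPath (hT : G.IsTree) {a b : V} {p : G.Walk a b} (hp : p.IsPath) :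
    p.length = G.dist a b := by
  obtain ⟨q, hq, hlen⟩ := hT.connected.exists_path_of_dist a b
  rw [(hT.existsUnique_path a b).unique hp hq, hlen]

lemma mem_support_iff_dist_eq_add (hT : G.IsTree) {a b : V} {p : G.Walk a b} (hp : p.IsPath)
    (x : V) : x ∈ p.support ↔ G.dist a b = G.dist a x + G.dist x b := by
  constructor
  · intro hx
    have hlen := congrArg Walk.length (p.take_spec hx)
    rw [Walk.length_append, hT.length_eq_dist_of_isPath hp] at hlen
    have := dist_le (p.takeUntil x hx)
    have := dist_le (p.dropUntil x hx)
    have := hT.connected.dist_triangle (u := a) (v := x) (w := b)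
    omega
  · intro hd
    obtain ⟨w₁, hw₁⟩ := hT.connected.exists_walk_length_eq_dist a x
    obtain ⟨w₂, hw₂⟩ := hT.connected.exists_walk_length_eq_dist x b
    have hq : (w₁.append w₂).IsPath :=
      (w₁.append w₂).isPath_of_length_eq_dist (by rw [Walk.length_append, hw₁, hw₂, hd])
    rw [(hT.existsUnique_path a b).unique hp hq, Walk.mem_support_append_iff]
    exact Or.inl w₁.end_mem_support

end SimpleGraph.IsTree

open SimpleGraph

namespace IsAnc

variable {V : Type} {G : SimpleGraph V} {r u v w : V}

@[refl]
lemma refl (v : V) : IsAnc G r v v := by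
  rw [IsAnc, dist_self, Nat.add_zero]

lemma dist_le (h : IsAnc G r v u) : G.dist r v ≤ G.dist r u := by
  rw [h]; exact Nat.le_add_right _ _

lemma trans (hc : G.Connected) (h₁ : IsAnc G r w v) (h₂ : IsAnc G r v u) : IsAnc G r w u := by
  have := hc.dist_triangle (u := r) (v := w) (w := u)
  have := hc.dist_triangle (u := w) (v := v) (w := u)
  unfold IsAnc at *
  omega

lemma eq_of_dist_le (hc : G.Connected) (h : IsAnc G r v u) (hd : G.dist r u ≤ G.dist r v) :
    v = u := by
  refine hc.dist_eq_zero_iff.mp ?_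
  unfold IsAnc at h
  omega

lemma dist_lt (hc : G.Connected) (h : IsAnc G r v u) (hne : v ≠ u) :
    G.dist r v < G.dist r u :=
  lt_of_le_of_ne h.dist_le fun hd => hne (h.eq_of_dist_le hc hd.ge)

lemma total (hT : G.IsTree) (h₁ : IsAnc G r v u) (h₂ : IsAnc G r w u) :
    IsAnc G r v w ∨ IsAnc G r w v := by
  obtain ⟨p, hp, -⟩ := hT.connected.exists_path_of_dist r u
  have hv : v ∈ p.support := (hT.mem_support_iff_dist_eq_add hp v).mpr h₁
  have hw : w ∈ p.support := (hT.mem_support_iff_dist_eq_add hp w).mpr h₂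
  rw [← p.take_spec hv, Walk.mem_support_append_iff] at hw
  rcases hw with hw | hw
  · exact Or.inr ((hT.mem_support_iff_dist_eq_add (hp.takeUntil hv) w).mp hw)
  · have := (hT.mem_support_iff_dist_eq_add (hp.dropUntil hv) w).mp hw
    have := hT.connected.dist_triangle (u := r) (v := v) (w := w)
    have := hT.connected.dist_triangle (u := r) (v := w) (w := u)
    unfold IsAnc at *
    left
    omega

lemma of_dist_le (hT : G.IsTree) (h₁ : IsAnc G r v u) (h₂ : IsAnc G r w u)
    (hd : G.dist r v ≤ G.dist r w) : IsAnc G r v w := by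
  rcases h₁.total hT h₂ with h | h
  · exact h
  · rw [h.eq_of_dist_le hT.connected hd]

end IsAnc

section Tree

variable {V : Type} {G : SimpleGraph V} {r : V}

lemma isAnc_or_isAnc_of_adj (hT : G.IsTree) {x y : V} (h : G.Adj x y) :
    IsAnc G r x y ∨ IsAnc G r y x := by
  unfold IsAnc
  rw [dist_comm (u := y), dist_eq_one_iff_adj.mpr h]
  exact (hT.dist_eq_dist_add_one_of_adj r h).symm.imp id id

lemma eq_of_adj_of_isAnc (hT : G.IsTree) {u y₁ y₂ : V} (a₁ : G.Adj y₁ u) (a₂ : G.Adj y₂ u)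
    (h₁ : IsAnc G r y₁ u) (h₂ : IsAnc G r y₂ u) : y₁ = y₂ := by
  have d₁ := dist_eq_one_iff_adj.mpr a₁
  have d₂ := dist_eq_one_iff_adj.mpr a₂
  rcases h₁.total hT h₂ with h | h
  · exact h.eq_of_dist_le hT.connected (by unfold IsAnc at *; omega)
  · exact (h.eq_of_dist_le hT.connected (by unfold IsAnc at *; omega)).symm

end Tree

section Subtree

variable {V : Type} {G : SimpleGraph V} {r : V} {s : Set V}

lemma exists_walk_support_subset (hs : (G.induce s).Connected) {a b : V} (ha : a ∈ s)
    (hb : b ∈ s) : ∃ w : G.Walk a b, ∀ x ∈ w.support, x ∈ s := by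
  obtain ⟨q⟩ := hs ⟨a, ha⟩ ⟨b, hb⟩
  refine ⟨q.map (Embedding.induce s).toHom, fun x hx => ?_⟩
  erw [Walk.support_map, List.mem_map] at hx
  obtain ⟨y, -, rfl⟩ := hx
  exact y.2

lemma mem_of_isAnc_of_isAnc (hT : G.IsTree) (hs : (G.induce s).Connected) {a b x : V}
    (ha : a ∈ s) (hb : b ∈ s) (hax : IsAnc G r a x) (hxb : IsAnc G r x b) : x ∈ s := by
  obtain ⟨w, hw⟩ := exists_walk_support_subset hs ha hb
  have hd : G.dist a b = G.dist a x + G.dist x b := by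
    have := hax.trans hT.connected hxb
    unfold IsAnc at *
    omega
  exact hw x (w.support_bypass_subset_support
    ((hT.mem_support_iff_dist_eq_add w.bypass_isPath x).mpr hd))

/-- By the choice of `m`, a step of the walk to a parent cannot climb above `m`. -/
lemma isAnc_of_walk (hT : G.IsTree) {m : V} (hmin : ∀ v ∈ s, G.dist r m ≤ G.dist r v) :
    ∀ {a b : V} (w : G.Walk a b), (∀ x ∈ w.support, x ∈ s) → IsAnc G r m a → IsAnc G r m b
  | _, _, .nil, _, h => h
  | _, _, .cons hadj w, hw, h => by
    refine isAnc_of_walk hT hmin w (fun x hx => hw x (List.mem_cons_of_mem _ hx)) ?_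
    rcases isAnc_or_isAnc_of_adj (r := r) hT hadj with h' | h'
    · exact h.trans hT.connected h'
    · exact h.of_dist_le hT h' (hmin _ (hw _ (List.mem_cons_of_mem _ w.start_mem_support)))

lemma isAnc_of_forall_dist_le (hT : G.IsTree) (hs : (G.induce s).Connected) {m v : V}
    (hm : m ∈ s) (hmin : ∀ v ∈ s, G.dist r m ≤ G.dist r v) (hv : v ∈ s) : IsAnc G r m v := by
  obtain ⟨w, hw⟩ := exists_walk_support_subset hs hm hv
  exact isAnc_of_walk hT hmin w hw (IsAnc.refl m)

end Subtree

section Leaves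

variable {V : Type} {G : SimpleGraph V} {r : V}

noncomputable def leafSet (G : SimpleGraph V) (s : Finset V) (rt : V) : Finset V :=
  s.filter fun v => v ≠ rt ∧ #(s.filter fun u => G.Adj v u) ≤ 1

lemma leavesCnt_eq_card_leafSet [DecidableEq V] (s : Finset V) (rt : V) :
    leavesCnt G s rt = #(leafSet G s rt) := by
  unfold leavesCnt leafSet
  congr

/-- A deepest vertex of `s` below `v`, hence a leaf of `s` (junk `v` when `v ∉ s`). -/
noncomputable def descendLeaf (G : SimpleGraph V) (r : V) (s : Finset V) (v : V) : V :=
  if h : (s.filter fun w => IsAnc G r v w).Nonempty then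
    Classical.choose (exists_max_image _ (fun w => G.dist r w) h)
  else v

lemma descendLeaf_spec {s : Finset V} {v : V} (hv : v ∈ s) :
    descendLeaf G r s v ∈ s ∧ IsAnc G r v (descendLeaf G r s v) ∧
      ∀ w ∈ s, IsAnc G r v w → G.dist r w ≤ G.dist r (descendLeaf G r s v) := by
  have hne : (s.filter fun w => IsAnc G r v w).Nonempty := ⟨v, mem_filter.mpr ⟨hv, .refl v⟩⟩
  rw [descendLeaf, dif_pos hne]
  obtain ⟨hmem, hmax⟩ := Classical.choose_spec (exists_max_image _ (fun w => G.dist r w) hne)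
  rw [mem_filter] at hmem
  exact ⟨hmem.1, hmem.2, fun w hw hvw => hmax w (mem_filter.mpr ⟨hw, hvw⟩)⟩

lemma descendLeaf_mem_leafSet (hT : G.IsTree) {s : Finset V} {rt v x : V}
    (hroot : ∀ w ∈ s, IsAnc G r rt w) (hv : v ∈ s) (hx : x ∈ s) (hxrt : x ≠ rt) :
    descendLeaf G r s v ∈ leafSet G s rt := by
  obtain ⟨hLs, hvL, hLmax⟩ := descendLeaf_spec (G := G) (r := r) hv
  set L := descendLeaf G r s v
  refine mem_filter.mpr ⟨hLs, fun hLrt => ?_, card_le_one.mpr fun a ha b hb => ?_⟩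
  · have hvrt : rt = v := (hroot v hv).eq_of_dist_le hT.connected (hLrt ▸ hvL.dist_le)
    have hxL := hLmax x hx (hvrt ▸ hroot x hx)
    rw [hLrt] at hxL
    exact hxrt ((hroot x hx).eq_of_dist_le hT.connected hxL).symm
  · have hparent : ∀ c ∈ s, G.Adj L c → IsAnc G r c L := fun c hc hLc =>
      (isAnc_or_isAnc_of_adj hT hLc).resolve_left fun hLc' =>
        absurd (hLmax c hc (hvL.trans hT.connected hLc'))
          (not_le.mpr (hLc'.dist_lt hT.connected hLc.ne))
    rw [mem_filter] at ha hb
    exact eq_of_adj_of_isAnc hT ha.2.symm hb.2.symm (hparent a ha.1 ha.2) (hparent b hb.1 hb.2)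

end Leaves

section Objects

variable {V : Type} {G : SimpleGraph V} {r : V}

noncomputable def lowerEnd (G : SimpleGraph V) (r : V) (e : Sym2 V) : V :=
  if G.dist r e.out.1 ≤ G.dist r e.out.2 then e.out.2 else e.out.1

lemma lowerEnd_mem (e : Sym2 V) : lowerEnd G r e ∈ e := by
  unfold lowerEnd
  split
  · exact Sym2.out_snd_mem e
  · exact Sym2.out_fst_mem e

lemma dist_le_lowerEnd {e : Sym2 V} {x : V} (hx : x ∈ e) :
    G.dist r x ≤ G.dist r (lowerEnd G r e) := by
  have he : e = s(e.out.1, e.out.2) := (Quot.out_eq e).symm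
  rw [he, Sym2.mem_iff] at hx
  unfold lowerEnd
  split <;> rcases hx with rfl | rfl <;> omega

lemma isAnc_lowerEnd (hT : G.IsTree) {e : Sym2 V} (he : e ∈ G.edgeSet) {x : V} (hx : x ∈ e) :
    IsAnc G r x (lowerEnd G r e) := by
  by_cases hxL : x = lowerEnd G r e
  · rw [hxL]
  · have hadj : G.Adj x (lowerEnd G r e) := by
      rwa [(Sym2.mem_and_mem_iff hxL).mp ⟨hx, lowerEnd_mem e⟩] at he
    refine (isAnc_or_isAnc_of_adj hT hadj).resolve_right fun h => hxL ?_
    exact (h.eq_of_dist_le hT.connected (dist_le_lowerEnd hx)).symm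

noncomputable def bottom (G : SimpleGraph V) (r : V) : Object V → V
  | .inl v => v
  | .inr e => lowerEnd G r e

lemma ContainsObj.bottom_mem {s : Finset V} {o : Object V} (h : ContainsObj G s o) :
    bottom G r o ∈ s := by
  cases o with
  | inl v => exact h
  | inr e => exact h.2 _ (lowerEnd_mem e)

lemma ContainsObj.of_isAnc_bottom (hT : G.IsTree) {s t : Finset V} {o : Object V} {b : V}
    (h : ContainsObj G s o) (hb : IsAnc G r (bottom G r o) b)
    (hst : ∀ x ∈ s, IsAnc G r x b → x ∈ t) : ContainsObj G t o := by
  cases o with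
  | inl v => exact hst v h hb
  | inr e =>
    exact ⟨h.1, fun x hx => hst x (h.2 x hx) ((isAnc_lowerEnd hT h.1 hx).trans hT.connected hb)⟩

end Objects

section Greedy

variable {V : Type} {n : ℕ} {G : SimpleGraph V} {r : V} {S : Fin n → Finset V}
  {k : Object V → ℕ}

lemma load_mono {U W : Finset (Fin n)} (h : U ⊆ W) (o : Object V) :
    load G S U o ≤ load G S W o :=
  card_le_card (filter_subset_filter _ h)

lemma load_insert_le (U : Finset (Fin n)) (i : Fin n) (o : Object V) :
    load G S (insert i U) o ≤ load G S U o + 1 := by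
  unfold load
  rw [filter_insert]
  split
  · exact card_insert_le _ _
  · exact Nat.le_succ _

lemma load_insert_of_not_containsObj {U : Finset (Fin n)} {i : Fin n} {o : Object V}
    (h : ¬ContainsObj G (S i) o) : load G S (insert i U) o = load G S U o := by
  unfold load
  rw [filter_insert, if_neg h]

lemma greedy_succ_of_lt {m : ℕ} (hm : m < n) :
    greedy G S k (m + 1) = if Feasible G S k (insert ⟨m, hm⟩ (greedy G S k m))
      then insert ⟨m, hm⟩ (greedy G S k m) else greedy G S k m := by
  rw [greedy, dif_pos hm]

lemma greedy_succ_of_le {m : ℕ} (hm : n ≤ m) : greedy G S k (m + 1) = greedy G S k m := by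
  rw [greedy, dif_neg (not_lt.mpr hm)]

lemma greedy_subset_succ (m : ℕ) : greedy G S k m ⊆ greedy G S k (m + 1) := by
  rcases lt_or_ge m n with hm | hm
  · rw [greedy_succ_of_lt hm]
    split
    · exact subset_insert _ _
    · exact subset_rfl
  · rw [greedy_succ_of_le hm]

lemma greedy_mono : Monotone (greedy G S k) :=
  monotone_nat_of_le_succ greedy_subset_succ

lemma val_lt_of_mem_greedy {m : ℕ} {j : Fin n} (h : j ∈ greedy G S k m) : (j : ℕ) < m := by
  induction m with
  | zero => simp [greedy] at h
  | succ m ih =>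
    rcases lt_or_ge m n with hm | hm
    · rw [greedy_succ_of_lt hm] at h
      split at h
      · rcases mem_insert.mp h with rfl | h
        · exact Nat.lt_succ_self m
        · exact Nat.lt_succ_of_lt (ih h)
      · exact Nat.lt_succ_of_lt (ih h)
    · rw [greedy_succ_of_le hm] at h
      exact Nat.lt_succ_of_lt (ih h)

lemma feasible_greedy (m : ℕ) : Feasible G S k (greedy G S k m) := by
  induction m with
  | zero => simp [Feasible, greedy, load]
  | succ m ih =>
    rcases lt_or_ge m n with hm | hm
    · rw [greedy_succ_of_lt hm]
      split
      · assumption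
      · exact ih
    · rwa [greedy_succ_of_le hm]

variable (G S k) in
/-- `greedy G S k i` is the greedy solution just before `T_i` (indexed from `0`) is considered. -/
def Blocks (i : Fin n) (o : Object V) : Prop :=
  ContainsObj G (S i) o ∧ k o ≤ load G S (greedy G S k i) o

lemma exists_blocks_of_notMem_greedy {i : Fin n} (h : i ∉ greedy G S k n) :
    ∃ o, Blocks G S k i o := by
  have hinf : ¬Feasible G S k (insert i (greedy G S k i)) := fun hf =>
    h (greedy_mono i.isLt (by rw [greedy_succ_of_lt i.isLt, if_pos hf]; exact mem_insert_self _ _))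
  obtain ⟨o, ho⟩ := not_forall.mp hinf
  have hcont : ContainsObj G (S i) o := by
    by_contra hc
    exact ho (by rw [load_insert_of_not_containsObj hc]; exact feasible_greedy _ o)
  have := load_insert_le (G := G) (S := S) (greedy G S k i) i o
  exact ⟨o, hcont, by omega⟩

lemma Blocks.lt_of_mem_greedy {i j : Fin n} {o : Object V} (h : Blocks G S k i o)
    (hj : j ∈ greedy G S k n) (hjo : ContainsObj G (S j) o) : j < i := by
  have heq : (greedy G S k i).filter (fun j => ContainsObj G (S j) o) =
      (greedy G S k n).filter (fun j => ContainsObj G (S j) o) :=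
    eq_of_subset_of_card_le (filter_subset_filter _ (greedy_mono i.isLt.le))
      ((feasible_greedy n o).trans h.2)
  have hmem : j ∈ (greedy G S k n).filter (fun j => ContainsObj G (S j) o) :=
    mem_filter.mpr ⟨hj, hjo⟩
  rw [← heq, mem_filter] at hmem
  exact val_lt_of_mem_greedy hmem.1

lemma Blocks.load_le {i : Fin n} {o : Object V} {U : Finset (Fin n)} (h : Blocks G S k i o)
    (hU : Feasible G S k U) : load G S U o ≤ load G S (greedy G S k n) o :=
  (hU o).trans (h.2.trans (load_mono (greedy_mono i.isLt.le) o))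

lemma Blocks.of_le {i i' : Fin n} {o : Object V} (h : Blocks G S k i o) (hii' : i ≤ i')
    (hc : ContainsObj G (S i') o) : Blocks G S k i' o :=
  ⟨hc, h.2.trans (load_mono (greedy_mono hii') o)⟩

variable (G r S k) in
def IsTopBlocker (i : Fin n) (o : Object V) : Prop :=
  Blocks G S k i o ∧ ∀ o', Blocks G S k i o' → G.dist r (bottom G r o) ≤ G.dist r (bottom G r o')

lemma exists_isTopBlocker {i : Fin n} (h : i ∉ greedy G S k n) :
    ∃ o, IsTopBlocker G r S k i o := by
  obtain ⟨o, ho⟩ := exists_blocks_of_notMem_greedy h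
  let f : Object V → ℕ := fun o => G.dist r (bottom G r o)
  exact ⟨_, Function.argminOn_mem f {o | Blocks G S k i o} ⟨o, ho⟩,
    fun o' ho' => Function.argminOn_le f {o | Blocks G S k i o} ho'⟩

end Greedy

section BottomUp

variable {V : Type} {n : ℕ} {G : SimpleGraph V} {r : V} {S : Fin n → Finset V}
  {rt : Fin n → V} {k : Object V → ℕ}

variable (G r) in
def IsBottomUp (rt : Fin n → V) : Prop :=
  ∀ ⦃i j : Fin n⦄, i ≤ j → IsAnc G r (rt i) (rt j) → rt i = rt j

lemma isBottomUp_of_postorder {pos : V → ℕ} (hposinj : Function.Injective pos)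
    (hpost : ∀ u v : V, IsAnc G r v u → pos u ≤ pos v)
    (hord : ∀ i j : Fin n, i ≤ j → pos (rt i) ≤ pos (rt j)) : IsBottomUp G r rt :=
  fun i j hij h => hposinj (le_antisymm (hord i j hij) (hpost _ _ h))

lemma IsBottomUp.isAnc_root (hbu : IsBottomUp G r rt) (hT : G.IsTree)
    (hroot : ∀ i, ∀ v ∈ S i, IsAnc G r (rt i) v) {i j : Fin n} (hji : j ≤ i) {b : V}
    (hbj : b ∈ S j) (hbi : b ∈ S i) : IsAnc G r (rt i) (rt j) := by
  rcases (hroot i b hbi).total hT (hroot j b hbj) with h | h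
  · exact h
  · rw [hbu hji h]

/-- `rt i` is an ancestor of `rt j`, so every vertex of `T_j` above `b` lies between `rt i`
and `b`. -/
lemma IsBottomUp.containsObj_of_le (hbu : IsBottomUp G r rt) (hT : G.IsTree)
    (hroot : ∀ i, ∀ v ∈ S i, IsAnc G r (rt i) v) {i j : Fin n}
    (hsub : (G.induce (S i : Set V)).Connected) (hrt : rt i ∈ S i) (hji : j ≤ i) {b : V}
    (hbj : b ∈ S j) (hbi : b ∈ S i) {o : Object V} (hjo : ContainsObj G (S j) o)
    (hob : IsAnc G r (bottom G r o) b) : ContainsObj G (S i) o :=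
  hjo.of_isAnc_bottom hT hob fun x hx hxb => mem_of_isAnc_of_isAnc hT hsub hrt hbi
    ((hbu.isAnc_root hT hroot hji hbj hbi).trans hT.connected (hroot j x hx)) hxb

/-- The bottoms of `o` and `o'` lie above a common leaf of `T_j`, so they are comparable, and
that of `o'` cannot be the higher one by the choice of `o`. -/
lemma containsObj_of_descendLeaf_eq (hT : G.IsTree)
    (hsub : ∀ i, (G.induce (S i : Set V)).Connected) (hrt : ∀ i, rt i ∈ S i)
    (hroot : ∀ i, ∀ v ∈ S i, IsAnc G r (rt i) v) (hbu : IsBottomUp G r rt)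
    {i i' j : Fin n} {o o' : Object V} (hi'i : i' ≤ i) (ho : IsTopBlocker G r S k i o)
    (ho' : IsTopBlocker G r S k i' o') (hj : j ∈ greedy G S k n)
    (hjo : ContainsObj G (S j) o) (hjo' : ContainsObj G (S j) o')
    (hL : descendLeaf G r (S j) (bottom G r o) = descendLeaf G r (S j) (bottom G r o')) :
    ContainsObj G (S i') o := by
  have hanc := (descendLeaf_spec (G := G) (r := r) (hjo.bottom_mem (r := r))).2.1
  have hanc' := (descendLeaf_spec (G := G) (r := r) (hjo'.bottom_mem (r := r))).2.1
  rw [← hL] at hanc'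
  by_cases hd : G.dist r (bottom G r o') < G.dist r (bottom G r o)
  · have hoi : Blocks G S k i o' := ho'.1.of_le hi'i <|
      hbu.containsObj_of_le hT hroot (hsub i) (hrt i) (ho.1.lt_of_mem_greedy hj hjo).le
        hjo.bottom_mem ho.1.1.bottom_mem hjo' (hanc'.of_dist_le hT hanc hd.le)
    exact absurd (ho.2 o' hoi) (not_le.mpr hd)
  · exact hbu.containsObj_of_le hT hroot (hsub i') (hrt i') (ho'.1.lt_of_mem_greedy hj hjo').le
      hjo'.bottom_mem ho'.1.1.bottom_mem hjo (hanc.of_dist_le hT hanc' (not_lt.mp hd))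

end BottomUp

section Charging

variable {V : Type} {n : ℕ} {G : SimpleGraph V} {r : V} {S : Fin n → Finset V}
  {rt : Fin n → V} {k : Object V → ℕ}

variable (G r S) in
noncomputable def charges (A : Finset (Fin n)) (o : Object V) : Finset (Σ _ : Fin n, V) :=
  (A.filter fun j => ContainsObj G (S j) o).image
    fun j => ⟨j, descendLeaf G r (S j) (bottom G r o)⟩

lemma card_charges (A : Finset (Fin n)) (o : Object V) :
    #(charges G r S A o) = #(A.filter fun j => ContainsObj G (S j) o) :=
  card_image_of_injective _ fun _ _ h => (Sigma.mk.inj_iff.mp h).1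

lemma exists_of_not_disjoint_charges {A : Finset (Fin n)} {o o' : Object V}
    (h : ¬Disjoint (charges G r S A o) (charges G r S A o')) :
    ∃ j ∈ A, ContainsObj G (S j) o ∧ ContainsObj G (S j) o' ∧
      descendLeaf G r (S j) (bottom G r o) = descendLeaf G r (S j) (bottom G r o') := by
  obtain ⟨p, hp, hp'⟩ := not_disjoint_iff.mp h
  obtain ⟨j, hj, rfl⟩ := mem_image.mp hp
  obtain ⟨j', hj', hjj'⟩ := mem_image.mp hp'
  obtain ⟨rfl, hL⟩ := Sigma.mk.inj_iff.mp hjj'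
  rw [mem_filter] at hj hj'
  exact ⟨_, hj.1, hj.2, hj'.2, (eq_of_heq hL).symm⟩

lemma charges_subset_sigma_leafSet (hT : G.IsTree)
    (hroot : ∀ i, ∀ v ∈ S i, IsAnc G r (rt i) v) (hleaf : ∀ i, (leafSet G (S i) (rt i)).Nonempty)
    (A : Finset (Fin n)) (o : Object V) :
    charges G r S A o ⊆ A.sigma fun j => leafSet G (S j) (rt j) := by
  intro p hp
  obtain ⟨j, hj, rfl⟩ := mem_image.mp hp
  rw [mem_filter] at hj
  obtain ⟨x, hx⟩ := hleaf j
  obtain ⟨hxS, hxrt, -⟩ := mem_filter.mp hx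
  exact mem_sigma.mpr ⟨hj.1, descendLeaf_mem_leafSet hT (hroot j) hj.2.bottom_mem hxS hxrt⟩

/-- Every member of `u` contains the top blocker of `T_i`, which `O` cannot load more than the
greedy solution does. -/
lemma card_lt_card_charges (hT : G.IsTree)
    (hsub : ∀ i, (G.induce (S i : Set V)).Connected) (hrt : ∀ i, rt i ∈ S i)
    (hroot : ∀ i, ∀ v ∈ S i, IsAnc G r (rt i) v) (hbu : IsBottomUp G r rt)
    {O : Finset (Fin n)} (hO : Feasible G S k O) {blk : Fin n → Object V}
    (hblk : ∀ i ∈ O \ greedy G S k n, IsTopBlocker G r S k i (blk i)) {i : Fin n}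
    (hi : i ∈ O \ greedy G S k n) {u : Finset (Fin n)} (hu : u ⊆ O \ greedy G S k n)
    (hcoll : ∀ i' ∈ u, i' < i ∧ ¬Disjoint (charges G r S (greedy G S k n \ O) (blk i'))
      (charges G r S (greedy G S k n \ O) (blk i))) :
    #u < #(charges G r S (greedy G S k n \ O) (blk i)) := by
  set A := greedy G S k n
  have hsub' : u ⊆ ((O \ A).filter fun i' => ContainsObj G (S i') (blk i)).erase i := by
    intro i' hi'
    obtain ⟨hi'i, hdisj⟩ := hcoll i' hi'
    obtain ⟨j, hj, hjo', hjo, hL⟩ := exists_of_not_disjoint_charges hdisj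
    exact mem_erase.mpr ⟨hi'i.ne, mem_filter.mpr ⟨hu hi', containsObj_of_descendLeaf_eq hT hsub
      hrt hroot hbu hi'i.le (hblk i hi) (hblk i' (hu hi')) (mem_sdiff.mp hj).1 hjo hjo' hL.symm⟩⟩
  calc #u ≤ _ := card_le_card hsub'
    _ < #((O \ A).filter fun i' => ContainsObj G (S i') (blk i)) :=
      card_erase_lt_of_mem (mem_filter.mpr ⟨hi, (hblk i hi).1.1⟩)
    _ ≤ #((A \ O).filter fun j => ContainsObj G (S j) (blk i)) :=
      card_filter_sdiff_le_of_card_filter_le ((hblk i hi).1.load_le hO)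
    _ = _ := (card_charges _ _).symm

end Charging

theorem statement1_general
    {V : Type} [DecidableEq V] (G : SimpleGraph V)
    (hTree : G.IsTree) (r : V)
    {n : ℕ} (S : Fin n → Finset V)
    -- each `S i` is (the vertex set of) a subtree, i.e. a connected subgraph of `G`
    (hsub : ∀ i, (G.induce (S i : Set V)).Connected)
    -- `rt i` is the vertex of the subtree `S i` closest to the root `r`
    (rt : Fin n → V) (hrtmem : ∀ i, rt i ∈ S i)
    (hrtmin : ∀ i, ∀ v ∈ S i, G.dist r (rt i) ≤ G.dist r v)
    -- `pos` is a post-order (bottom-up) traversal of the tree ...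
    (pos : V → ℕ) (hposinj : Function.Injective pos)
    (hpost : ∀ u v : V, IsAnc G r v u → pos u ≤ pos v)
    -- ... along which the roots of the subtrees appear in nondecreasing order
    (hord : ∀ i j : Fin n, i ≤ j → pos (rt i) ≤ pos (rt j))
    (k : Object V → ℕ)
    -- every subtree has at least one leaf other than its root, and `M` bounds these numbers
    (M : ℕ) (hM1 : ∀ i, 1 ≤ leavesCnt G (S i) (rt i))
    (hM : ∀ i, leavesCnt G (S i) (rt i) ≤ M)
    -- `OPT` is a feasible subset of maximum cardinality
    (OPT : Finset (Fin n)) (hOPTfeas : Feasible G S k OPT) :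
    OPT.card ≤ M * (greedy G S k n).card := by
  have hroot : ∀ i, ∀ v ∈ S i, IsAnc G r (rt i) v := fun i _ hv =>
    isAnc_of_forall_dist_le hTree (hsub i) (hrtmem i) (hrtmin i) hv
  have hleaf : ∀ i, (leafSet G (S i) (rt i)).Nonempty := fun i =>
    card_pos.mp (leavesCnt_eq_card_leafSet (G := G) _ _ ▸ hM1 i)
  set ALG := greedy G S k n
  have : Nonempty V := ⟨r⟩
  choose! blk hblk using fun i (hi : i ∈ OPT \ ALG) =>
    exists_isTopBlocker (r := r) (mem_sdiff.mp hi).2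
  have hrejected : #(OPT \ ALG) ≤ M * #(ALG \ OPT) := calc
    #(OPT \ ALG) ≤ #((OPT \ ALG).biUnion fun i => charges G r S (ALG \ OPT) (blk i)) :=
      card_le_card_biUnion_of_forall_card_lt _ _ fun i hi _ hu =>
        card_lt_card_charges hTree hsub hrtmem hroot
          (isBottomUp_of_postorder hposinj hpost hord) hOPTfeas hblk hi hu
    _ ≤ #((ALG \ OPT).sigma fun j => leafSet G (S j) (rt j)) :=
      card_le_card (biUnion_subset.mpr fun i _ =>
        charges_subset_sigma_leafSet hTree hroot hleaf _ _)
    _ ≤ M * #(ALG \ OPT) := by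
      rw [card_sigma, mul_comm]
      exact sum_le_card_nsmul _ _ _ fun j _ => leavesCnt_eq_card_leafSet (G := G) _ _ ▸ hM j
  have hcommon : #(OPT ∩ ALG) ≤ M * #(ALG ∩ OPT) := by
    rw [inter_comm]
    rcases (ALG ∩ OPT).eq_empty_or_nonempty with h | ⟨i, -⟩
    · simp [h]
    · exact Nat.le_mul_of_pos_left _ ((hM1 i).trans (hM i))
  calc #OPT = #(OPT ∩ ALG) + #(OPT \ ALG) := (card_inter_add_card_sdiff _ _).symm
    _ ≤ M * #(ALG ∩ OPT) + M * #(ALG \ OPT) := add_le_add hcommon hrejected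
    _ = M * #ALG := by rw [← mul_add, card_inter_add_card_sdiff]

/-- **Theorem (M-approximation).** The bottom-up greedy algorithm satisfies
`|OPT| ≤ M · |ALG|`, i.e. it is an `M`-approximation for the problem of finding a
maximum-cardinality feasible subset of the given subtrees. -/
theorem statement1
    {V : Type} [Fintype V] [DecidableEq V] (G : SimpleGraph V)
    (hTree : G.IsTree) (r : V)
    {n : ℕ} (S : Fin n → Finset V)
    -- each `S i` is (the vertex set of) a subtree, i.e. a connected subgraph of `G`
    (hsub : ∀ i, (G.induce (S i : Set V)).Connected)
    -- `rt i` is the vertex of the subtree `S i` closest to the root `r`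
    (rt : Fin n → V) (hrtmem : ∀ i, rt i ∈ S i)
    (hrtmin : ∀ i, ∀ v ∈ S i, G.dist r (rt i) ≤ G.dist r v)
    -- `pos` is a post-order (bottom-up) traversal of the tree ...
    (pos : V → ℕ) (hposinj : Function.Injective pos)
    (hpost : ∀ u v : V, IsAnc G r v u → pos u ≤ pos v)
    (hcontig : ∀ u x v : V, IsAnc G r v u → pos u ≤ pos x → pos x ≤ pos v → IsAnc G r v x)
    -- ... along which the roots of the subtrees appear in nondecreasing order
    (hord : ∀ i j : Fin n, i ≤ j → pos (rt i) ≤ pos (rt j))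
    (k : Object V → ℕ)
    -- every subtree has at least one leaf other than its root, and `M` bounds these numbers
    (M : ℕ) (hM1 : ∀ i, 1 ≤ leavesCnt G (S i) (rt i))
    (hM : ∀ i, leavesCnt G (S i) (rt i) ≤ M)
    -- `OPT` is a feasible subset of maximum cardinality
    (OPT : Finset (Fin n)) (hOPTfeas : Feasible G S k OPT)
    (hOPTmax : ∀ U : Finset (Fin n), Feasible G S k U → U.card ≤ OPT.card) :
    OPT.card ≤ M * (greedy G S k n).card :=
  statement1_general G hTree r S hsub rt hrtmem hrtmin pos hposinj hpost hord k M hM1 hM OPT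
    hOPTfeas
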